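/- A triword of size n lies on some maximal-length saturated chain of the Hochschild lattice (from 0^n to 1·2^{n-1}) if and only if every letter following a letter 0 is also 0, i.e., the triword belongs to 0* + 1(1+2)*0*. -/

import Mathlib

def IsTriword {n : ℕ} (u : Fin n → Fin 3) : Prop :=
  (∀ i : Fin n, (i : ℕ) = 0 → u i ≠ 2) ∧
  ∀ i j : Fin n, i < j → u i = 0 → u j ≠ 1

abbrev Triword (n : ℕ) := {u : Fin n → Fin 3 // IsTriword u}

namespace HochAux
open Finset

variable {n : ℕ}

def wt (v : Fin n → Fin 3) : ℕ := ∑ i, (v i : ℕ)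

def Step (x y : Fin n → Fin 3) : Prop :=
  ∃ i, ((y i : ℕ) = (x i : ℕ) + 1) ∧ ∀ j, j ≠ i → y j = x j

def Good (v : Fin n → Fin 3) : Prop := ∀ i j : Fin n, i < j → v i = 0 → v j = 0

lemma fin3_eq_iff {a b : Fin 3} : a = b ↔ (a : ℕ) = (b : ℕ) := by
  constructor
  · rintro rfl; rfl
  · exact fun h => Fin.ext h

lemma le_of_step {x y : Fin n → Fin 3} (h : Step x y) : x ≤ y := by
  obtain ⟨i, hi, hj⟩ := h
  intro j
  by_cases hji : j = i
  · subst hji; rw [Fin.le_def]; omega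
  · rw [hj j hji]

lemma wt_step {x y : Fin n → Fin 3} (h : Step x y) : wt y = wt x + 1 := by
  obtain ⟨i, hi, hj⟩ := h
  unfold wt
  rw [Fintype.sum_eq_add_sum_compl i, Fintype.sum_eq_add_sum_compl i (fun j => ((x j : ℕ)))]
  have : ∑ j ∈ {i}ᶜ, ((y j : ℕ)) = ∑ j ∈ {i}ᶜ, ((x j : ℕ)) := by
    apply Finset.sum_congr rfl
    intro j hjmem
    simp only [Finset.mem_compl, Finset.mem_singleton] at hjmem
    rw [hj j hjmem]
  omega

lemma wt_le_of_le {x y : Fin n → Fin 3} (h : x ≤ y) : wt x ≤ wt y := by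
  apply Finset.sum_le_sum
  intro i _
  exact h i

lemma eq_of_le_of_wt_le {x y : Fin n → Fin 3} (h : x ≤ y) (hw : wt y ≤ wt x) : x = y := by
  have hle : ∀ i ∈ Finset.univ, ((x i : ℕ)) ≤ ((y i : ℕ)) := fun i _ => h i
  have hs : ∑ i, ((x i : ℕ)) ≤ ∑ i, ((y i : ℕ)) := Finset.sum_le_sum hle
  have heq : ∀ j ∈ Finset.univ, ((x j : ℕ)) = ((y j : ℕ)) :=
    (Finset.sum_eq_sum_iff_of_le hle).mp (le_antisymm hs hw)
  funext i
  exact Fin.ext (heq i (Finset.mem_univ i))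

lemma wt_lt_of_lt {x y : Fin n → Fin 3} (h : x < y) : wt x < wt y := by
  have hle := le_of_lt h
  rcases lt_or_ge (wt x) (wt y) with h1 | h1
  · exact h1
  · exact absurd (eq_of_le_of_wt_le hle h1) (ne_of_lt h)

lemma step_of_wt {x y : Fin n → Fin 3} (hle : x ≤ y) (hw : wt y = wt x + 1) : Step x y := by
  have hne : x ≠ y := by intro h; subst h; omega
  have : ∃ i, x i ≠ y i := by
    by_contra hc
    push_neg at hc
    exact hne (funext hc)
  obtain ⟨i, hi⟩ := this
  have hi' : (x i : ℕ) < (y i : ℕ) := lt_of_le_of_ne (hle i) (fun h => hi (Fin.ext h))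
  refine ⟨i, ?_, ?_⟩
  · have h1 : ∑ j ∈ {i}ᶜ, ((x j : ℕ)) ≤ ∑ j ∈ {i}ᶜ, ((y j : ℕ)) :=
      Finset.sum_le_sum (fun j _ => hle j)
    have h2 := Fintype.sum_eq_add_sum_compl i (fun j => ((y j : ℕ)))
    have h3 := Fintype.sum_eq_add_sum_compl i (fun j => ((x j : ℕ)))
    unfold wt at hw
    omega
  · intro j hj
    have h1 : ∑ k ∈ {i}ᶜ, ((x k : ℕ)) ≤ ∑ k ∈ {i}ᶜ, ((y k : ℕ)) :=
      Finset.sum_le_sum (fun k _ => hle k)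
    have h2 := Fintype.sum_eq_add_sum_compl i (fun k => ((y k : ℕ)))
    have h3 := Fintype.sum_eq_add_sum_compl i (fun k => ((x k : ℕ)))
    unfold wt at hw
    have hsum : ∑ k ∈ {i}ᶜ, ((y k : ℕ)) ≤ ∑ k ∈ {i}ᶜ, ((x k : ℕ)) := by omega
    have heq : ∀ k ∈ ({i}ᶜ : Finset (Fin n)), ((x k : ℕ)) = ((y k : ℕ)) := by
      rw [← Finset.sum_eq_sum_iff_of_le (fun k _ => (show ((x k : ℕ)) ≤ ((y k : ℕ)) from hle k))]
      exact le_antisymm h1 hsum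
    exact (Fin.ext (heq j (by simp [hj]))).symm

lemma covBy_of_step (x y : Triword n) (h : Step x.1 y.1) : x ⋖ y := by
  obtain ⟨i, hi, hj⟩ := h
  have hle : x ≤ y := le_of_step ⟨i, hi, hj⟩
  have hlt : x < y := lt_of_le_of_ne hle (by
    intro hxy
    rw [hxy] at hi
    omega)
  refine ⟨hlt, ?_⟩
  intro z hxz hzy
  have hxz' : x.1 ≤ z.1 := le_of_lt hxz
  have hzy' : z.1 ≤ y.1 := le_of_lt hzy
  have hzeq : ∀ k, k ≠ i → z.1 k = x.1 k := by
    intro k hk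
    have h1 := hxz' k
    have h2 := hzy' k
    rw [hj k hk] at h2
    exact le_antisymm h2 h1
  rcases eq_or_lt_of_le (hxz' i) with hcase | hcase
  · have hzx : z = x := Subtype.ext (funext fun k => by
      by_cases hk : k = i
      · subst hk; exact hcase.symm
      · exact hzeq k hk)
    exact absurd hxz (by rw [hzx]; exact lt_irrefl x)
  · have hzi : z.1 i = y.1 i := by
      have h1 : (x.1 i : ℕ) < (z.1 i : ℕ) := hcase
      have h2 : (z.1 i : ℕ) ≤ (y.1 i : ℕ) := hzy' i
      exact Fin.ext (by omega)
    have hzy2 : z = y := Subtype.ext (funext fun k => by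
      by_cases hk : k = i
      · subst hk; exact hzi
      · rw [hzeq k hk, hj k hk])
    exact absurd hzy (by rw [hzy2]; exact lt_irrefl y)


lemma down (v : Fin n → Fin 3) (hv : IsTriword v) (hg : Good v) :
    ∃ d : ℕ → Fin n → Fin 3, d 0 = (fun _ => 0) ∧ d (wt v) = v ∧
      (∀ t, t < wt v → Step (d t) (d (t+1))) ∧ (∀ t, t ≤ wt v → IsTriword (d t)) := by
  suffices H : ∀ W (v : Fin n → Fin 3), wt v = W → IsTriword v → Good v →
      ∃ d : ℕ → Fin n → Fin 3, d 0 = (fun _ => 0) ∧ d W = v ∧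
        (∀ t, t < W → Step (d t) (d (t+1))) ∧ (∀ t, t ≤ W → IsTriword (d t)) by
    obtain ⟨d, h1, h2, h3, h4⟩ := H (wt v) v rfl hv hg
    exact ⟨d, h1, h2, h3, h4⟩
  intro W
  induction W with
  | zero =>
    intro v hw hv hg
    have hz : v = (fun _ => 0) := by
      funext i
      have : ∀ j ∈ Finset.univ, ((v j : ℕ)) = 0 :=
        Finset.sum_eq_zero_iff.mp hw
      exact Fin.ext (this i (Finset.mem_univ i))
    subst hz
    exact ⟨fun _ => (fun _ => 0), rfl, rfl, fun t ht => absurd ht (by omega),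
      fun t _ => hv⟩
  | succ W ih =>
    intro v hw hv hg
    -- the set of nonzero positions is nonempty
    have hne : (Finset.univ.filter (fun i => v i ≠ 0)).Nonempty := by
      by_contra hc
      rw [Finset.not_nonempty_iff_eq_empty, Finset.filter_eq_empty_iff] at hc
      have : wt v = 0 := Finset.sum_eq_zero (fun i hi => by
        have := hc hi
        push_neg at this
        rw [this]; rfl)
      omega
    set m := (Finset.univ.filter (fun i => v i ≠ 0)).max' hne with hm
    have hmmem : m ∈ Finset.univ.filter (fun i => v i ≠ 0) := Finset.max'_mem _ hne
    have hmne : v m ≠ 0 := (Finset.mem_filter.mp hmmem).2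
    have hmval : 1 ≤ (v m : ℕ) := by
      rcases Nat.eq_zero_or_pos (v m : ℕ) with h | h
      · exact absurd (Fin.ext h) hmne
      · exact h
    have hmax : ∀ j, m < j → v j = 0 := by
      intro j hj
      by_contra hc
      have : j ∈ Finset.univ.filter (fun i => v i ≠ 0) := Finset.mem_filter.mpr ⟨Finset.mem_univ j, hc⟩
      exact absurd hj (not_lt.mpr (Finset.le_max' _ j this))
    set v' : Fin n → Fin 3 := fun j => if j = m then ⟨(v m : ℕ) - 1, by omega⟩ else v j with hv'
    have hstep : Step v' v := by
      refine ⟨m, ?_, ?_⟩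
      · simp only [hv', if_pos rfl]
        omega
      · intro j hj; simp only [hv', if_neg hj]
    have hwt' : wt v' = W := by
      have := wt_step hstep
      omega
    have htri' : IsTriword v' := by
      constructor
      · intro i hi
        by_cases him : i = m
        · subst him
          simp only [hv', if_pos rfl]
          intro h
          have := Fin.ext_iff.mp h
          simp at this
          have := (v m).isLt
          omega
        · simp only [hv', if_neg him]
          exact hv.1 i hi
      · intro i j hij hi0 hj1
        by_cases hjm : j = m
        · subst hjm
          have him : i ≠ m := ne_of_lt hij
          simp only [hv', if_neg him] at hi0
          simp only [hv', if_pos rfl] at hj1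
          have := hg i m hij hi0
          have := Fin.ext_iff.mp this
          have h2 := Fin.ext_iff.mp hj1
          simp at h2 this
          omega
        · simp only [hv', if_neg hjm] at hj1
          by_cases him : i = m
          · subst him
            -- j > m, so v j = 0, contradicting v' j = v j = 1
            have := hmax j hij
            rw [this] at hj1
            exact absurd hj1 (by decide)
          · simp only [hv', if_neg him] at hi0
            exact hv.2 i j hij hi0 hj1
    have hg' : Good v' := by
      intro i j hij hi0
      by_cases him : i = m
      · subst him
        have hjm : j ≠ m := (ne_of_lt hij).symm
        simp only [hv', if_neg hjm]
        exact hmax j hij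
      · simp only [hv', if_neg him] at hi0
        by_cases hjm : j = m
        · subst hjm
          exact absurd (hg i m hij hi0) hmne
        · simp only [hv', if_neg hjm]
          exact hg i j hij hi0
    obtain ⟨d', hd1, hd2, hd3, hd4⟩ := ih v' hwt' htri' hg'
    refine ⟨fun t => if t = W + 1 then v else d' t, ?_, ?_, ?_, ?_⟩
    · simp only [if_neg (by omega : (0:ℕ) ≠ W + 1)]
      exact hd1
    · simp
    · intro t ht
      by_cases h : t + 1 = W + 1
      · have h1 : t ≠ W + 1 := by omega
        simp only [if_neg h1, if_pos h]
        have ht' : t = W := by omega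
        rw [ht', hd2]
        exact hstep
      · simp only [if_neg h, if_neg (by omega : t ≠ W + 1)]
        exact hd3 t (by omega)
    · intro t ht
      by_cases h : t = W + 1
      · simp only [if_pos h]; exact hv
      · simp only [if_neg h]; exact hd4 t (by omega)


def topw (n : ℕ) : Fin n → Fin 3 := fun i => if (i : ℕ) = 0 then 1 else 2

lemma wt_topw (hn : 1 ≤ n) : wt (topw n) = 2 * n - 1 := by
  obtain ⟨m, rfl⟩ : ∃ m, n = m + 1 := ⟨n - 1, by omega⟩
  unfold wt topw
  rw [Fin.sum_univ_succ]
  have h2 : ∀ i : Fin m, (Fin.val (if ((i.succ : Fin (m+1)) : ℕ) = 0 then (1 : Fin 3) else 2)) = 2 := by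
    intro i
    rw [if_neg (by simp [Fin.val_succ])]
    rfl
  rw [Finset.sum_congr rfl (fun i _ => h2 i)]
  simp [Finset.sum_const, Finset.card_univ]
  omega

lemma triword_topw : IsTriword (topw n) := by
  constructor
  · intro i hi
    unfold topw
    rw [if_pos hi]
    decide
  · intro i j hij hi0
    unfold topw at hi0 ⊢
    by_cases h : (i : ℕ) = 0
    · rw [if_pos h] at hi0; exact absurd hi0 (by decide)
    · rw [if_neg h] at hi0; exact absurd hi0 (by decide)

lemma wt_le_triword {v : Fin n → Fin 3} (hv : IsTriword v) (hn : 1 ≤ n) :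
    wt v ≤ 2 * n - 1 := by
  have hle : v ≤ topw n := by
    intro i
    unfold topw
    by_cases h : (i : ℕ) = 0
    · rw [if_pos h]
      have h2 := hv.1 i h
      have h3 : (v i : ℕ) ≠ 2 := fun hc => h2 (Fin.ext hc)
      have := (v i).isLt
      rw [Fin.le_def]
      simp only [Fin.val_one]
      omega
    · rw [if_neg h]
      have := (v i).isLt
      rw [Fin.le_def]
      have h22 : ((2 : Fin 3) : ℕ) = 2 := rfl
      omega
  calc wt v ≤ wt (topw n) := wt_le_of_le hle
    _ = 2 * n - 1 := wt_topw hn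

lemma up (hn : 1 ≤ n) (v : Fin n → Fin 3) (hv : IsTriword v) (hg : Good v) :
    ∃ e : ℕ → Fin n → Fin 3, e 0 = v ∧ e (2 * n - 1 - wt v) = topw n ∧
      (∀ t, t < 2 * n - 1 - wt v → Step (e t) (e (t+1))) ∧
      (∀ t, t ≤ 2 * n - 1 - wt v → IsTriword (e t)) := by
  suffices H : ∀ K (v : Fin n → Fin 3), IsTriword v → Good v → wt v + K = 2 * n - 1 →
      ∃ e : ℕ → Fin n → Fin 3, e 0 = v ∧ e K = topw n ∧
        (∀ t, t < K → Step (e t) (e (t+1))) ∧ (∀ t, t ≤ K → IsTriword (e t)) by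
    have hwle := wt_le_triword hv hn
    obtain ⟨e, h1, h2, h3, h4⟩ := H (2 * n - 1 - wt v) v hv hg (by omega)
    exact ⟨e, h1, h2, h3, h4⟩
  intro K
  induction K with
  | zero =>
    intro v hv hg hw
    have hvt : v = topw n := by
      apply eq_of_le_of_wt_le
      · intro i
        unfold topw
        by_cases h : (i : ℕ) = 0
        · rw [if_pos h]
          have h2 := hv.1 i h
          have h3 : (v i : ℕ) ≠ 2 := fun hc => h2 (Fin.ext hc)
          have := (v i).isLt
          rw [Fin.le_def]
          simp only [Fin.val_one]
          omega
        · rw [if_neg h]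
          have := (v i).isLt
          rw [Fin.le_def]
          have h22 : ((2 : Fin 3) : ℕ) = 2 := rfl
          omega
      · rw [wt_topw hn]; omega
    subst hvt
    exact ⟨fun _ => topw n, rfl, rfl, fun t ht => absurd ht (by omega), fun _ _ => hv⟩
  | succ K ih =>
    intro v hv hg hw
    -- find a successor v'
    have hsucc : ∃ v' : Fin n → Fin 3, Step v v' ∧ IsTriword v' ∧ Good v' := by
      by_cases hz : ∃ i, v i = 0
      · -- least zero position
        have hne : (Finset.univ.filter (fun i => v i = 0)).Nonempty := by
          obtain ⟨i, hi⟩ := hz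
          exact ⟨i, Finset.mem_filter.mpr ⟨Finset.mem_univ i, hi⟩⟩
        set m := (Finset.univ.filter (fun i => v i = 0)).min' hne with hm
        have hmmem := Finset.min'_mem _ hne
        have hm0 : v m = 0 := (Finset.mem_filter.mp hmmem).2
        have hmin : ∀ j, j < m → v j ≠ 0 := by
          intro j hj hc
          have : j ∈ Finset.univ.filter (fun i => v i = 0) :=
            Finset.mem_filter.mpr ⟨Finset.mem_univ j, hc⟩
          exact absurd hj (not_lt.mpr (Finset.min'_le _ j this))
        refine ⟨fun j => if j = m then 1 else v j, ⟨m, ?_, ?_⟩, ⟨?_, ?_⟩, ?_⟩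
        · simp only [if_pos rfl, hm0]
          rfl
        · intro j hj; simp only [if_neg hj]
        · -- first letter ≠ 2
          intro i hi
          by_cases him : i = m
          · subst him; simp only [if_pos rfl, ite_true]; decide
          · simp only [if_neg him]; exact hv.1 i hi
        · -- no 01
          intro i j hij hi0 hj1
          by_cases him : i = m
          · subst him
            simp only [if_pos rfl, ite_true] at hi0
            exact absurd hi0 (by decide)
          · simp only [if_neg him] at hi0
            have hmi : m < i := by
              rcases lt_trichotomy i m with h | h | h
              · exact absurd hi0 (hmin i h)
              · exact absurd h him
              · exact h
            by_cases hjm : j = m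
            · subst hjm; exact absurd hij (by omega)
            · simp only [if_neg hjm] at hj1
              exact hv.2 i j hij hi0 hj1
        · -- Good
          intro i j hij hi0
          by_cases him : i = m
          · subst him
            simp only [if_pos rfl, ite_true] at hi0
            exact absurd hi0 (by decide)
          · simp only [if_neg him] at hi0
            have hmi : m < i := by
              rcases lt_trichotomy i m with h | h | h
              · exact absurd hi0 (hmin i h)
              · exact absurd h him
              · exact h
            by_cases hjm : j = m
            · subst hjm; exact absurd hij (by omega)
            · simp only [if_neg hjm]
              exact hg i j hij hi0
      · -- no zero; look for a 1 in position ≥ 1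
        push_neg at hz
        by_cases h1 : ∃ i : Fin n, (i : ℕ) ≠ 0 ∧ v i = 1
        · obtain ⟨m, hm0, hm1⟩ := h1
          refine ⟨fun j => if j = m then 2 else v j, ⟨m, ?_, ?_⟩, ⟨?_, ?_⟩, ?_⟩
          · simp only [if_pos rfl, hm1]
            rfl
          · intro j hj; simp only [if_neg hj]
          · intro i hi
            have him : i ≠ m := by
              intro h; subst h; exact hm0 hi
            simp only [if_neg him]
            exact hv.1 i hi
          · intro i j hij hi0 _
            by_cases him : i = m
            · subst him
              simp only [if_pos rfl, ite_true] at hi0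
              exact absurd hi0 (by decide)
            · simp only [if_neg him] at hi0
              exact hz i hi0
          · intro i j hij hi0
            by_cases him : i = m
            · subst him
              simp only [if_pos rfl, ite_true] at hi0
              exact absurd hi0 (by decide)
            · simp only [if_neg him] at hi0
              exact absurd hi0 (hz i)
        · -- v is the top: contradiction with weight
          exfalso
          push_neg at h1
          have hvt : v = topw n := by
            funext i
            unfold topw
            by_cases h : (i : ℕ) = 0
            · rw [if_pos h]
              have h2 := hv.1 i h
              have h3 := hz i
              have hv1 := (v i).isLt
              have h2' : (v i : ℕ) ≠ 2 := fun hc => h2 (Fin.ext hc)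
              have h3' : (v i : ℕ) ≠ 0 := fun hc => h3 (Fin.ext hc)
              exact Fin.ext (by simp only [Fin.val_one]; omega)
            · rw [if_neg h]
              have h2 := h1 i h
              have h3 := hz i
              have hv1 := (v i).isLt
              have h2' : (v i : ℕ) ≠ 1 := fun hc => h2 (Fin.ext hc)
              have h3' : (v i : ℕ) ≠ 0 := fun hc => h3 (Fin.ext hc)
              refine Fin.ext ?_
              have h22 : ((2 : Fin 3) : ℕ) = 2 := rfl
              omega
          rw [hvt, wt_topw hn] at hw
          omega
    obtain ⟨v', hstep, htri', hg'⟩ := hsucc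
    have hwt' : wt v' + K = 2 * n - 1 := by
      have := wt_step hstep
      omega
    obtain ⟨e', he1, he2, he3, he4⟩ := ih v' htri' hg' hwt'
    refine ⟨fun t => if t = 0 then v else e' (t - 1), ?_, ?_, ?_, ?_⟩
    · simp
    · simp only [if_neg (by omega : K + 1 ≠ 0), Nat.add_sub_cancel]
      exact he2
    · intro t ht
      by_cases h : t = 0
      · subst h
        simp only [if_pos rfl, if_neg (by omega : (0:ℕ) + 1 ≠ 0)]
        simpa [he1] using hstep
      · simp only [if_neg h, if_neg (by omega : t + 1 ≠ 0)]
        have : t - 1 + 1 = t + 1 - 1 := by omega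
        rw [show t + 1 - 1 = (t - 1) + 1 by omega]
        exact he3 (t - 1) (by omega)
    · intro t ht
      by_cases h : t = 0
      · subst h; simpa using hv
      · simp only [if_neg h]
        exact he4 (t - 1) (by omega)

end HochAux

set_option maxHeartbeats 2000000 in
open HochAux in
/-- A triword of size `n ≥ 1` lies on some maximal-length saturated chain
(of length `2n - 1`, from `0^n` to `1·2^(n-1)`) of the Hochschild lattice
if and only if every letter following a letter `0` is also `0`. -/
theorem on_maximal_chain_iff (n : ℕ) (hn : 1 ≤ n) (u : Triword n) :
    (∃ c : Fin (2 * n - 1 + 1) → Triword n,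
        (c 0).1 = (fun _ : Fin n => (0 : Fin 3)) ∧
        (c (Fin.last (2 * n - 1))).1 = (fun i : Fin n => if (i : ℕ) = 0 then (1 : Fin 3) else 2) ∧
        (∀ i : Fin (2 * n - 1), c i.castSucc ⋖ c i.succ) ∧
        ∃ r, c r = u) ↔
    (∀ i j : Fin n, i < j → u.1 i = 0 → u.1 j = 0) := by
  constructor
  · rintro ⟨c, hc0, hcN, hcov, r, hr⟩ i j hij hi0
    by_contra hj0
    have hj2 : u.1 j = 2 := by
      have hj1 := u.2.2 i j hij hi0
      have h0 : (u.1 j : ℕ) ≠ 0 := fun h => hj0 (Fin.ext h)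
      have h1 : (u.1 j : ℕ) ≠ 1 := fun h => hj1 (Fin.ext h)
      have := (u.1 j).isLt
      have h22 : ((2 : Fin 3) : ℕ) = 2 := rfl
      exact Fin.ext (by omega)
    have hmono : StrictMono c := Fin.strictMono_iff_lt_succ.mpr (fun k => (hcov k).lt)
    have hrlt := r.isLt
    -- weight of each chain element equals its index
    have hWstep : ∀ m (h1 : m < 2 * n - 1 + 1) (h2 : m + 1 < 2 * n - 1 + 1),
        wt (c ⟨m, h1⟩).1 < wt (c ⟨m + 1, h2⟩).1 := by
      intro m h1 h2
      exact wt_lt_of_lt (Subtype.coe_lt_coe.2 (hmono (by rw [Fin.mk_lt_mk]; omega)))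
    have hWlow : ∀ m (h : m < 2 * n - 1 + 1), m ≤ wt (c ⟨m, h⟩).1 := by
      intro m
      induction m with
      | zero => intro _; omega
      | succ k ih =>
        intro h
        have h' : k < 2 * n - 1 + 1 := by omega
        have := hWstep k h' h
        have := ih h'
        omega
    have hWtop : wt (c (Fin.last (2 * n - 1))).1 = 2 * n - 1 := by
      rw [hcN]
      exact wt_topw hn
    have hWhigh : ∀ dd, dd ≤ 2 * n - 1 →
        wt (c ⟨2 * n - 1 - dd, by omega⟩).1 + dd ≤ 2 * n - 1 := by
      intro dd
      induction dd with
      | zero =>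
        intro _
        have hlast : (⟨2 * n - 1 - 0, by omega⟩ : Fin (2 * n - 1 + 1)) = Fin.last (2 * n - 1) :=
          Fin.ext (by simp [Fin.val_last])
        rw [hlast, hWtop]
        omega
      | succ kk ih =>
        intro h
        have hs := hWstep (2 * n - 1 - (kk + 1)) (by omega) (by omega)
        have heq : (⟨2 * n - 1 - (kk + 1) + 1, by omega⟩ : Fin (2 * n - 1 + 1))
            = ⟨2 * n - 1 - kk, by omega⟩ := Fin.ext (by simp; omega)
        rw [heq] at hs
        have := ih (by omega)
        omega
    have hWeq : ∀ m (h : m < 2 * n - 1 + 1), wt (c ⟨m, h⟩).1 = m := by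
      intro m h
      have ha := hWlow m h
      have hb := hWhigh (2 * n - 1 - m) (by omega)
      have heq : (⟨2 * n - 1 - (2 * n - 1 - m), by omega⟩ : Fin (2 * n - 1 + 1))
          = ⟨m, h⟩ := Fin.ext (by simp; omega)
      rw [heq] at hb
      omega
    have hstep : ∀ m (h1 : m < 2 * n - 1 + 1) (h2 : m + 1 < 2 * n - 1 + 1),
        Step (c ⟨m, h1⟩).1 (c ⟨m + 1, h2⟩).1 := by
      intro m h1 h2
      apply step_of_wt
      · exact Subtype.coe_le_coe.2 (hmono.monotone (by rw [Fin.mk_le_mk]; omega))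
      · rw [hWeq m h1, hWeq (m + 1) h2]
    -- coordinate j must pass through value 1 before time r
    have hfind : ∃ t, ∃ (ht : t < 2 * n - 1 + 1), t ≤ (r : ℕ) ∧ ((c ⟨t, ht⟩).1 j : ℕ) = 1 := by
      by_contra hc
      push_neg at hc
      have hzero : ∀ m (hm : m ≤ (r : ℕ)), ((c ⟨m, by omega⟩).1 j : ℕ) = 0 := by
        intro m
        induction m with
        | zero =>
          intro _
          have h00 : (⟨0, by omega⟩ : Fin (2 * n - 1 + 1)) = 0 := rfl
          rw [h00, hc0]
          rfl
        | succ k ih =>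
          intro hm
          have hk := ih (by omega)
          obtain ⟨i0, hi1, hi2⟩ := hstep k (by omega) (by omega)
          have hne := hc (k + 1) (by omega) hm
          by_cases hji : j = i0
          · subst hji; omega
          · rw [hi2 j hji]; omega
      have h2 := hzero (r : ℕ) le_rfl
      have hrr : (⟨(r : ℕ), by omega⟩ : Fin (2 * n - 1 + 1)) = r := rfl
      rw [hrr, hr, hj2] at h2
      exact absurd h2 (by decide)
    obtain ⟨t, ht, htr, ht1⟩ := hfind
    have hmle : (c ⟨t, ht⟩).1 ≤ u.1 := by
      rw [← hr]
      exact Subtype.coe_le_coe.2 (hmono.monotone (by rw [Fin.le_def]; simpa using htr))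
    have hti : (c ⟨t, ht⟩).1 i = 0 := by
      have h1 := hmle i
      rw [hi0] at h1
      have h2 : ((c ⟨t, ht⟩).1 i : ℕ) ≤ ((0 : Fin 3) : ℕ) := h1
      exact Fin.ext (by simp only [Fin.val_zero]; omega)
    have htj : (c ⟨t, ht⟩).1 j = 1 := Fin.ext (by rw [ht1]; rfl)
    exact (c ⟨t, ht⟩).2.2 i j hij hti htj
  · intro hgood
    have hW := wt_le_triword u.2 hn
    obtain ⟨d, hd1, hd2, hd3, hd4⟩ := down u.1 u.2 hgood
    obtain ⟨e, he1, he2, he3, he4⟩ := up hn u.1 u.2 hgood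
    refine ⟨fun t => if h : (t : ℕ) ≤ wt u.1 then ⟨d (t : ℕ), hd4 _ h⟩
        else ⟨e ((t : ℕ) - wt u.1), he4 _ (by have := t.isLt; omega)⟩, ?_, ?_, ?_, ?_⟩
    · simp only [dif_pos (show ((0 : Fin (2 * n - 1 + 1)) : ℕ) ≤ wt u.1 by
        simp)]
      show d ((0 : Fin (2 * n - 1 + 1)) : ℕ) = _
      rw [show ((0 : Fin (2 * n - 1 + 1)) : ℕ) = 0 from rfl]
      exact hd1
    · by_cases hcase : 2 * n - 1 ≤ wt u.1
      · have hWeq : wt u.1 = 2 * n - 1 := le_antisymm hW hcase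
        simp only [dif_pos (show ((Fin.last (2 * n - 1)) : ℕ) ≤ wt u.1 by
          rw [Fin.val_last]; omega)]
        show d ((Fin.last (2 * n - 1)) : ℕ) = _
        rw [Fin.val_last, ← hWeq, hd2]
        have h0 : 2 * n - 1 - wt u.1 = 0 := by omega
        rw [h0, he1] at he2
        exact he2
      · simp only [dif_neg (show ¬((Fin.last (2 * n - 1)) : ℕ) ≤ wt u.1 by
          rw [Fin.val_last]; omega)]
        show e (((Fin.last (2 * n - 1)) : ℕ) - wt u.1) = _
        rw [Fin.val_last]
        exact he2
    · intro k
      apply covBy_of_step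
      have hk := k.isLt
      have hcs : ((k.castSucc : Fin (2 * n - 1 + 1)) : ℕ) = (k : ℕ) := rfl
      have hsc : ((k.succ : Fin (2 * n - 1 + 1)) : ℕ) = (k : ℕ) + 1 := rfl
      by_cases h1 : (k : ℕ) + 1 ≤ wt u.1
      · simp only [dif_pos (show ((k.castSucc : Fin (2 * n - 1 + 1)) : ℕ) ≤ wt u.1 by
            rw [hcs]; omega),
          dif_pos (show ((k.succ : Fin (2 * n - 1 + 1)) : ℕ) ≤ wt u.1 by
            rw [hsc]; omega)]
        exact hd3 (k : ℕ) (by omega)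
      · by_cases h2 : (k : ℕ) ≤ wt u.1
        · simp only [dif_pos (show ((k.castSucc : Fin (2 * n - 1 + 1)) : ℕ) ≤ wt u.1 from h2),
            dif_neg (show ¬((k.succ : Fin (2 * n - 1 + 1)) : ℕ) ≤ wt u.1 from by
              rw [hsc]; omega)]
        
          show Step (d ((k.castSucc : Fin (2 * n - 1 + 1)) : ℕ))
            (e (((k.succ : Fin (2 * n - 1 + 1)) : ℕ) - wt u.1))
          have hkeq : (k : ℕ) = wt u.1 := by omega
          have hd2' : d ((k.castSucc : Fin (2 * n - 1 + 1)) : ℕ) = u.1 := by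
            rw [hcs, hkeq]; exact hd2
          have h3 : ((k.succ : Fin (2 * n - 1 + 1)) : ℕ) - wt u.1 = 1 := by
            rw [hsc]; omega
          rw [hd2', h3, ← he1]
          exact he3 0 (by omega)
        · simp only [dif_neg (show ¬((k.castSucc : Fin (2 * n - 1 + 1)) : ℕ) ≤ wt u.1 from by
              rw [hcs]; omega),
            dif_neg (show ¬((k.succ : Fin (2 * n - 1 + 1)) : ℕ) ≤ wt u.1 from by
              rw [hsc]; omega)]
          show Step (e (((k.castSucc : Fin (2 * n - 1 + 1)) : ℕ) - wt u.1))
            (e (((k.succ : Fin (2 * n - 1 + 1)) : ℕ) - wt u.1))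
          have h3 : ((k.succ : Fin (2 * n - 1 + 1)) : ℕ) - wt u.1
              = (((k.castSucc : Fin (2 * n - 1 + 1)) : ℕ) - wt u.1) + 1 := by
            rw [hcs, hsc]; omega
          rw [h3]
          exact he3 _ (by rw [hcs]; omega)
    · refine ⟨⟨wt u.1, by omega⟩, ?_⟩
      simp only [dif_pos (show ((⟨wt u.1, by omega⟩ : Fin (2 * n - 1 + 1)) : ℕ) ≤ wt u.1
        from le_rfl)]
      exact Subtype.ext hd2
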